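/- (Hilton–Milner theorem) Suppose r < n/2. If 𝓕 is an intersecting family of r-element subsets of {1, …, n} such that there is no element common to all sets of 𝓕, then |𝓕| ≤ C(n−1, r−1) − C(n−r−1, r−1) + 1, where C denotes the binomial coefficient. -/

import Mathlib

/-!
Compressions `j ↦ i` with `i < j` preserve size, uniformity and the (cross-)intersecting property,
and lower the total weight `∑ F, ∑ x ∈ F, x` unless they do nothing. Compressing a non-trivial
family either keeps it non-trivial or makes it trivial; in the latter case every set met `{i, j}`,
and deleting `i`, `j` from the sets containing exactly one of them leaves two non-empty
cross-intersecting `(r - 1)`-uniform families on `n - 2` points. Non-empty cross-intersecting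
`a`-uniform families on `m ≥ 2a` points satisfy `|𝓐| + |𝓑| ≤ C(m, a) - C(m - a, a) + 1`; this,
and the bound for shifted non-trivial families (which contain `{1, …, r}`, so that all their sets
meet it), are proved by induction on the ground set, splitting off its largest element: for
shifted families the links at that element stay cross-intersecting.
-/

open Finset
open scoped FinsetFamily

def CrossIntersecting {α : Type*} [DecidableEq α] (𝓐 𝓑 : Finset (Finset α)) : Prop :=
  ∀ A ∈ 𝓐, ∀ B ∈ 𝓑, (A ∩ B).Nonempty

namespace CrossIntersecting

variable {α β : Type*} [DecidableEq α] [DecidableEq β] {𝓐 𝓑 𝓐' 𝓑' : Finset (Finset α)}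
  {U : Finset α} {k : ℕ}

lemma symm (h : CrossIntersecting 𝓐 𝓑) : CrossIntersecting 𝓑 𝓐 := fun B hB A hA => by
  rw [inter_comm]
  exact h A hA B hB

lemma mono (h : CrossIntersecting 𝓐 𝓑) (h𝓐 : 𝓐' ⊆ 𝓐) (h𝓑 : 𝓑' ⊆ 𝓑) :
    CrossIntersecting 𝓐' 𝓑' :=
  fun A hA B hB => h A (h𝓐 hA) B (h𝓑 hB)

lemma pos_of_subset_powersetCard (h : CrossIntersecting 𝓐 𝓑) (h𝓐 : 𝓐 ⊆ U.powersetCard k)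
    (hA : 𝓐.Nonempty) (hB : 𝓑.Nonempty) : 0 < k := by
  obtain ⟨A, hA⟩ := hA
  obtain ⟨B, hB⟩ := hB
  rw [← (mem_powersetCard.1 (h𝓐 hA)).2, card_pos]
  exact (h A hA B hB).mono inter_subset_left

lemma map (h : CrossIntersecting 𝓐 𝓑) (f : α ↪ β) :
    CrossIntersecting (𝓐.map (mapEmbedding f).toEmbedding)
      (𝓑.map (mapEmbedding f).toEmbedding) := by
  simp only [CrossIntersecting, mem_map, RelEmbedding.coe_toEmbedding, mapEmbedding_apply]
  rintro _ ⟨A, hA, rfl⟩ _ ⟨B, hB, rfl⟩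
  rw [← map_inter, map_nonempty]
  exact h A hA B hB

end CrossIntersecting

section Compression

variable {U A B F : Finset ℕ} {𝓐 𝓑 𝓖 : Finset (Finset ℕ)} {i j k : ℕ}

def IsShifted (U : Finset ℕ) (𝓖 : Finset (Finset ℕ)) : Prop :=
  ∀ F ∈ 𝓖, ∀ i ∈ U, ∀ j ∈ F, i < j → i ∉ F → (insert i F).erase j ∈ 𝓖

lemma UV.compress_singleton :
    UV.compress {i} {j} A = if i ∉ A ∧ j ∈ A then (insert i A).erase j else A := by
  unfold UV.compress
  simp only [disjoint_singleton_left, singleton_subset_iff]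
  split_ifs
  · ext x
    simp only [mem_sdiff, sup_eq_union, mem_union, mem_singleton, mem_erase, mem_insert]
    tauto
  · rfl

lemma sum_erase_insert_lt (hij : i < j) (hi : i ∉ A) (hj : j ∈ A) :
    ∑ x ∈ (insert i A).erase j, x < ∑ x ∈ A, x := by
  have h := sum_erase_add (insert i A) id (mem_insert_of_mem hj)
  rw [sum_insert hi] at h
  simp only [id] at h
  omega

def totalWeight (𝓖 : Finset (Finset ℕ)) : ℕ := ∑ A ∈ 𝓖, ∑ x ∈ A, x

lemma totalWeight_compression_lt (hij : i < j) (h : 𝓒 {i} {j} 𝓖 ≠ 𝓖) :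
    totalWeight (𝓒 {i} {j} 𝓖) < totalWeight 𝓖 := by
  have hsplit : {A ∈ 𝓖 | UV.compress {i} {j} A ∈ 𝓖} ∪ {A ∈ 𝓖 | UV.compress {i} {j} A ∉ 𝓖} = 𝓖 :=
    filter_union_filter_not_eq _ _
  have hmoved : {A ∈ 𝓖 | UV.compress {i} {j} A ∉ 𝓖}.Nonempty := by
    contrapose! h
    rw [UV.compression, filter_image, h, image_empty, union_empty]
    rwa [h, union_empty] at hsplit
  rw [totalWeight, totalWeight, UV.compression, sum_union UV.compress_disjoint]
  conv_rhs => rw [← hsplit]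
  rw [sum_union (disjoint_filter_filter_not _ _ _), add_lt_add_iff_left, filter_image,
    sum_image UV.compress_injOn]
  refine sum_lt_sum_of_nonempty hmoved fun A hA => ?_
  obtain ⟨hA, hcA⟩ := mem_filter.1 hA
  rw [UV.compress_singleton] at hcA ⊢
  split_ifs at hcA ⊢ with hmove
  · exact sum_erase_insert_lt hij hmove.1 hmove.2
  · exact absurd hA hcA

lemma totalWeight_compression_le (hij : i < j) : totalWeight (𝓒 {i} {j} 𝓖) ≤ totalWeight 𝓖 := by
  by_cases h : 𝓒 {i} {j} 𝓖 = 𝓖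
  · rw [h]
  · exact (totalWeight_compression_lt hij h).le

lemma compression_subset_powersetCard (hi : i ∈ U) (h𝓖 : 𝓖 ⊆ U.powersetCard k) :
    𝓒 {i} {j} 𝓖 ⊆ U.powersetCard k := by
  intro A hA
  rcases UV.mem_compression.1 hA with ⟨hA, -⟩ | ⟨-, B, hB, rfl⟩
  · exact h𝓖 hA
  obtain ⟨hBU, hBk⟩ := mem_powersetCard.1 (h𝓖 hB)
  refine mem_powersetCard.2
    ⟨?_, by rw [UV.card_compress (by rw [card_singleton, card_singleton]), hBk]⟩
  rw [UV.compress_singleton]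
  split_ifs
  · exact (erase_subset _ _).trans (insert_subset hi hBU)
  · exact hBU

lemma inter_nonempty_of_mem_compression_of_notMem (h : CrossIntersecting 𝓐 𝓑)
    (hA : A ∈ 𝓒 {i} {j} 𝓐) (hA' : A ∉ 𝓐) (hB : UV.compress {i} {j} B ∈ 𝓑) : (A ∩ B).Nonempty := by
  have hiA : i ∈ A := singleton_subset_iff.1 (UV.le_of_mem_compression_of_notMem hA hA')
  have hjA : j ∉ A := disjoint_singleton_left.1 (UV.disjoint_of_mem_compression_of_notMem hA hA')
  by_cases hiB : i ∈ B
  · exact ⟨i, mem_inter.2 ⟨hiA, hiB⟩⟩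
  obtain ⟨z, hz⟩ := h _ (UV.sup_sdiff_mem_of_mem_compression_of_notMem hA hA') _ hB
  rw [UV.compress_singleton] at hz
  refine ⟨z, ?_⟩
  split_ifs at hz with hmove <;>
  · simp only [mem_inter, mem_sdiff, sup_eq_union, mem_union, mem_singleton, mem_erase,
      mem_insert] at hz ⊢
    grind

lemma CrossIntersecting.compression (h : CrossIntersecting 𝓐 𝓑) :
    CrossIntersecting (𝓒 {i} {j} 𝓐) (𝓒 {i} {j} 𝓑) := by
  intro A hA B hB
  have compress_mem {𝓖 : Finset (Finset ℕ)} {G : Finset ℕ} (hG : G ∈ 𝓒 {i} {j} 𝓖) (hG' : G ∈ 𝓖) :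
      UV.compress {i} {j} G ∈ 𝓖 := by
    rcases UV.mem_compression.1 hG with ⟨-, h⟩ | ⟨h, -⟩
    exacts [h, absurd hG' h]
  by_cases hA' : A ∈ 𝓐 <;> by_cases hB' : B ∈ 𝓑
  · exact h A hA' B hB'
  · rw [inter_comm]
    exact inter_nonempty_of_mem_compression_of_notMem h.symm hB hB' (compress_mem hA hA')
  · exact inter_nonempty_of_mem_compression_of_notMem h hA hA' (compress_mem hB hB')
  · exact ⟨i, mem_inter.2 ⟨singleton_subset_iff.1 (UV.le_of_mem_compression_of_notMem hA hA'),
      singleton_subset_iff.1 (UV.le_of_mem_compression_of_notMem hB hB')⟩⟩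

lemma exists_compression_ne_of_not_isShifted (h𝓖 : 𝓖 ⊆ U.powersetCard k) (h : ¬ IsShifted U 𝓖) :
    ∃ i ∈ U, ∃ j ∈ U, i < j ∧ 𝓒 {i} {j} 𝓖 ≠ 𝓖 := by
  simp only [IsShifted, not_forall] at h
  obtain ⟨F, hF, i, hi, j, hj, hij, hiF, hmoved⟩ := h
  refine ⟨i, hi, j, (mem_powersetCard.1 (h𝓖 hF)).1 hj, hij, fun hc => hmoved ?_⟩
  have := UV.compress_mem_compression (u := {i}) (v := {j}) hF
  rwa [hc, UV.compress_singleton, if_pos ⟨hiF, hj⟩] at this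

lemma mem_or_mem_of_forall_mem_compression (hnt : ¬ ∃ a, ∀ F ∈ 𝓖, a ∈ F)
    (h : ∃ a, ∀ F ∈ 𝓒 {i} {j} 𝓖, a ∈ F) (hF : F ∈ 𝓖) : i ∈ F ∨ j ∈ F := by
  obtain ⟨a, ha⟩ := h
  obtain ⟨F₁, hF₁, haF₁⟩ : ∃ F₁ ∈ 𝓖, a ∉ F₁ := by simpa using not_exists.1 hnt a
  have hai : a = i := by
    have := ha _ (UV.compress_mem_compression hF₁)
    rw [UV.compress_singleton] at this
    split_ifs at this
    · exact (mem_insert.1 (mem_of_mem_erase this)).resolve_right haF₁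
    · exact absurd this haF₁
  have := ha _ (UV.compress_mem_compression hF)
  rw [hai, UV.compress_singleton] at this
  split_ifs at this with hmove
  · exact Or.inr hmove.2
  · exact Or.inl this

end Compression

section Subfamilies

variable {U : Finset ℕ} {𝓐 𝓑 𝓖 : Finset (Finset ℕ)} {a k x y : ℕ}

lemma nonMemberSubfamily_subset_powersetCard (h𝓖 : 𝓖 ⊆ U.powersetCard k) :
    𝓖.nonMemberSubfamily a ⊆ (U.erase a).powersetCard k := by
  intro A hA
  obtain ⟨hA, haA⟩ := mem_nonMemberSubfamily.1 hA
  obtain ⟨hAU, hAk⟩ := mem_powersetCard.1 (h𝓖 hA)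
  exact mem_powersetCard.2 ⟨subset_erase.2 ⟨hAU, haA⟩, hAk⟩

lemma memberSubfamily_subset_powersetCard (h𝓖 : 𝓖 ⊆ U.powersetCard k) :
    𝓖.memberSubfamily a ⊆ (U.erase a).powersetCard (k - 1) := by
  intro A hA
  obtain ⟨hA, haA⟩ := mem_memberSubfamily.1 hA
  obtain ⟨hAU, hAk⟩ := mem_powersetCard.1 (h𝓖 hA)
  rw [card_insert_of_notMem haA] at hAk
  exact mem_powersetCard.2 ⟨subset_erase.2 ⟨(subset_insert _ _).trans hAU, haA⟩, by omega⟩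

lemma IsShifted.nonMemberSubfamily (h : IsShifted U 𝓖) :
    IsShifted (U.erase a) (𝓖.nonMemberSubfamily a) := by
  intro F hF i hi j hj hij hiF
  obtain ⟨hF, haF⟩ := mem_nonMemberSubfamily.1 hF
  refine mem_nonMemberSubfamily.2 ⟨h F hF i (mem_of_mem_erase hi) j hj hij hiF, ?_⟩
  simp only [mem_erase, mem_insert, not_and, not_or]
  exact fun _ => ⟨(ne_of_mem_erase hi).symm, haF⟩

lemma IsShifted.memberSubfamily (h : IsShifted U 𝓖) :
    IsShifted (U.erase a) (𝓖.memberSubfamily a) := by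
  intro F hF i hi j hj hij hiF
  obtain ⟨hF, haF⟩ := mem_memberSubfamily.1 hF
  have hia : i ≠ a := ne_of_mem_erase hi
  have hja : j ≠ a := fun h => haF (h ▸ hj)
  have hshift := h _ hF i (mem_of_mem_erase hi) j (mem_insert_of_mem hj) hij
    (by simp [hia, hiF])
  rw [insert_comm, erase_insert_of_ne hja.symm] at hshift
  refine mem_memberSubfamily.2 ⟨hshift, ?_⟩
  simp [hia.symm, haF]

lemma IsShifted.nonMemberSubfamily_nonempty (h : IsShifted U 𝓖) (h𝓖 : 𝓖 ⊆ U.powersetCard k)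
    (hne : 𝓖.Nonempty) (hk : k < #U) (ha : ∀ x ∈ U, x ≤ a) :
    (𝓖.nonMemberSubfamily a).Nonempty := by
  obtain ⟨A, hA⟩ := hne
  obtain ⟨hAU, hAk⟩ := mem_powersetCard.1 (h𝓖 hA)
  by_cases haA : a ∈ A
  · obtain ⟨x, hx⟩ : (U \ A).Nonempty := by
      rw [← card_pos, card_sdiff_of_subset hAU]
      omega
    obtain ⟨hxU, hxA⟩ := mem_sdiff.1 hx
    have hxa : x < a := lt_of_le_of_ne (ha x hxU) (fun h => hxA (h ▸ haA))
    exact ⟨_, mem_nonMemberSubfamily.2 ⟨h A hA x hxU a haA hxa hxA, notMem_erase _ _⟩⟩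
  · exact ⟨A, mem_nonMemberSubfamily.2 ⟨hA, haA⟩⟩

lemma inter_nonempty_of_mem_memberSubfamily {T H : Finset ℕ}
    (hmeet : ∀ G ∈ 𝓖, (G ∩ T).Nonempty) (haT : a ∉ T) (hH : H ∈ 𝓖.memberSubfamily a) :
    (H ∩ T).Nonempty := by
  obtain ⟨z, hz⟩ := hmeet _ (mem_memberSubfamily.1 hH).1
  obtain ⟨hzH, hzT⟩ := mem_inter.1 hz
  exact ⟨z, mem_inter.2 ⟨(mem_insert.1 hzH).resolve_left (ne_of_mem_of_not_mem hzT haT), hzT⟩⟩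

/-- Two disjoint links would leave room for an element `x` below the top; shifting the top to `x`
in the set of `𝓑` gives a member of `𝓑` missing the set of `𝓐`. -/
lemma CrossIntersecting.memberSubfamily (h : CrossIntersecting 𝓐 𝓑)
    (h𝓐 : 𝓐 ⊆ U.powersetCard k) (h𝓑 : 𝓑 ⊆ U.powersetCard k) (hsh : IsShifted U 𝓑)
    (ha : ∀ x ∈ U, x ≤ a) (hk : 2 * k ≤ #U) :
    CrossIntersecting (𝓐.memberSubfamily a) (𝓑.memberSubfamily a) := by
  intro A hA B hB
  obtain ⟨-, hBk⟩ := mem_powersetCard.1 (memberSubfamily_subset_powersetCard h𝓑 hB)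
  obtain ⟨hA, haA⟩ := mem_memberSubfamily.1 hA
  obtain ⟨hB, haB⟩ := mem_memberSubfamily.1 hB
  by_contra hAB
  have haU : a ∈ U := (mem_powersetCard.1 (h𝓐 hA)).1 (mem_insert_self a A)
  have hk : #A + 1 = k := by rw [← card_insert_of_notMem haA, (mem_powersetCard.1 (h𝓐 hA)).2]
  obtain ⟨x, hx⟩ : (U.erase a \ (A ∪ B)).Nonempty := by
    have := le_card_sdiff (A ∪ B) (U.erase a)
    rw [card_erase_of_mem haU] at this
    have := card_union_le A B
    rw [← card_pos]
    omega
  obtain ⟨hxU, hxAB⟩ := mem_sdiff.1 hx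
  have hxa : x < a := lt_of_le_of_ne (ha x (mem_of_mem_erase hxU)) (ne_of_mem_erase hxU)
  have hshift := hsh _ hB x (mem_of_mem_erase hxU) a (mem_insert_self a B) hxa
    (by simp [hxa.ne, (notMem_union.1 hxAB).2])
  rw [erase_insert_of_ne hxa.ne, erase_insert haB] at hshift
  obtain ⟨z, hz⟩ := h _ hA _ hshift
  simp only [mem_inter, mem_insert] at hz
  rcases hz with ⟨rfl | hzA, rfl | hzB⟩
  · exact hxa.ne rfl
  · exact haB hzB
  · exact hxAB (mem_union_left _ hzA)
  · exact hAB ⟨z, mem_inter.2 ⟨hzA, hzB⟩⟩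

lemma CrossIntersecting.memberSubfamily_nonMemberSubfamily (h : CrossIntersecting 𝓐 𝓑) :
    CrossIntersecting ((𝓐.nonMemberSubfamily y).memberSubfamily x)
      ((𝓑.memberSubfamily y).nonMemberSubfamily x) := by
  intro A hA B hB
  simp only [mem_memberSubfamily, mem_nonMemberSubfamily] at hA hB
  obtain ⟨z, hz⟩ := h _ hA.1.1 _ hB.1.1
  refine ⟨z, ?_⟩
  simp only [mem_inter, mem_insert] at hz hA hB ⊢
  grind

lemma card_eq_of_forall_mem_or_mem (hcover : ∀ F ∈ 𝓖, x ∈ F ∨ y ∈ F) :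
    #𝓖 = #((𝓖.nonMemberSubfamily y).memberSubfamily x) +
      #((𝓖.memberSubfamily y).nonMemberSubfamily x) +
      #((𝓖.memberSubfamily y).memberSubfamily x) := by
  have hnone : (𝓖.nonMemberSubfamily y).nonMemberSubfamily x = ∅ := by
    refine eq_empty_of_forall_notMem fun F hF => ?_
    simp only [mem_nonMemberSubfamily] at hF
    exact (hcover F hF.1.1).elim hF.2 hF.1.2
  have := card_memberSubfamily_add_card_nonMemberSubfamily y 𝓖
  have := card_memberSubfamily_add_card_nonMemberSubfamily x (𝓖.memberSubfamily y)
  have h := card_memberSubfamily_add_card_nonMemberSubfamily x (𝓖.nonMemberSubfamily y)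
  rw [hnone, card_empty] at h
  omega

end Subfamilies

section Counting

variable {U B : Finset ℕ} {𝓐 𝓑 𝓖 : Finset (Finset ℕ)} {k m : ℕ}

lemma card_add_choose_le_of_forall_inter_nonempty (h𝓖 : 𝓖 ⊆ U.powersetCard k) (hB : B ⊆ U)
    (hmeet : ∀ G ∈ 𝓖, (G ∩ B).Nonempty) : #𝓖 + (#U - #B).choose k ≤ (#U).choose k := by
  have hdisj : Disjoint 𝓖 ((U \ B).powersetCard k) := by
    refine disjoint_left.2 fun G hG hG' => ?_
    obtain ⟨z, hz⟩ := hmeet G hG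
    exact (mem_sdiff.1 ((mem_powersetCard.1 hG').1 (mem_inter.1 hz).1)).2 (mem_inter.1 hz).2
  have hsub : 𝓖 ∪ (U \ B).powersetCard k ⊆ U.powersetCard k :=
    union_subset h𝓖 (powersetCard_mono sdiff_subset)
  simpa [card_union_of_disjoint hdisj, card_sdiff_of_subset hB] using card_le_card hsub

/-- On `2k` points the complements of the members of `𝓑` are `k`-sets, none of which is in `𝓐`. -/
lemma card_add_card_le_choose_of_card_eq (h𝓐 : 𝓐 ⊆ U.powersetCard k) (h𝓑 : 𝓑 ⊆ U.powersetCard k)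
    (hU : #U = 2 * k) (h : CrossIntersecting 𝓐 𝓑) : #𝓐 + #𝓑 ≤ (2 * k).choose k := by
  have hcompl : #(𝓑.image (U \ ·)) = #𝓑 := by
    refine card_image_of_injOn fun B hB B' hB' hBB' => ?_
    rw [← Finset.sdiff_sdiff_eq_self (mem_powersetCard.1 (h𝓑 hB)).1,
      ← Finset.sdiff_sdiff_eq_self (mem_powersetCard.1 (h𝓑 hB')).1]
    exact congrArg (U \ ·) hBB'
  have hdisj : Disjoint 𝓐 (𝓑.image (U \ ·)) := by
    refine disjoint_left.2 fun A hA hA' => ?_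
    obtain ⟨B, hB, rfl⟩ := mem_image.1 hA'
    obtain ⟨z, hz⟩ := h _ hA B hB
    exact (mem_sdiff.1 (mem_inter.1 hz).1).2 (mem_inter.1 hz).2
  have hsub : 𝓐 ∪ 𝓑.image (U \ ·) ⊆ U.powersetCard k := by
    refine union_subset h𝓐 fun A hA => ?_
    obtain ⟨B, hB, rfl⟩ := mem_image.1 hA
    obtain ⟨hBU, hBk⟩ := mem_powersetCard.1 (h𝓑 hB)
    exact mem_powersetCard.2 ⟨sdiff_subset, by rw [card_sdiff_of_subset hBU, hU, hBk]; omega⟩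
  have := card_le_card hsub
  rwa [card_union_of_disjoint hdisj, hcompl, card_powersetCard, hU] at this

lemma erdos_ko_rado_range (h𝓖 : 𝓖 ⊆ (range m).powersetCard k)
    (h : CrossIntersecting 𝓖 𝓖) (hkm : 2 * k ≤ m) : #𝓖 ≤ (m - 1).choose (k - 1) := by
  set 𝓖' : Finset (Finset (Fin m)) := {G | G.map Fin.valEmbedding ∈ 𝓖}
  have hmap : 𝓖'.map (mapEmbedding Fin.valEmbedding).toEmbedding = 𝓖 := by
    ext G
    simp only [mem_map, RelEmbedding.coe_toEmbedding, mapEmbedding_apply, 𝓖', mem_filter,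
      mem_univ, true_and]
    refine ⟨fun ⟨G', hG', hG'G⟩ => hG'G ▸ hG', fun hG => ?_⟩
    have hGm : ∀ x ∈ G, x < m := fun x hx => mem_range.1 ((mem_powersetCard.1 (h𝓖 hG)).1 hx)
    exact ⟨G.attachFin hGm, by rwa [map_valEmbedding_attachFin], map_valEmbedding_attachFin hGm⟩
  rw [← hmap, card_map]
  refine erdos_ko_rado (fun G hG G' hG' hdisj => ?_) (fun G hG => ?_) (by omega)
  · have := h _ (mem_filter.1 hG).2 _ (mem_filter.1 hG').2
    rw [← map_inter, map_nonempty, ← not_disjoint_iff_nonempty_inter] at this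
    exact this hdisj
  · simpa using (mem_powersetCard.1 (h𝓖 (mem_filter.1 hG).2)).2

end Counting

section ShiftedFamilies

variable {F : Finset ℕ} {𝓕 𝓗 : Finset (Finset ℕ)} {k m n r t : ℕ}

lemma IsShifted.eq_empty_of_forall_inter_Icc (hsh : IsShifted (range m) 𝓗)
    (h𝓗 : 𝓗 ⊆ (range m).powersetCard k) (hmeet : ∀ H ∈ 𝓗, (H ∩ Icc 1 t).Nonempty) (hk : k ≤ 1) :
    𝓗 = ∅ := by
  refine eq_empty_of_forall_notMem fun H hH => ?_
  obtain ⟨x, hx⟩ := hmeet H hH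
  obtain ⟨hxH, hx1, -⟩ : x ∈ H ∧ 1 ≤ x ∧ x ≤ t := by simpa using hx
  obtain ⟨hHm, hHk⟩ := mem_powersetCard.1 (h𝓗 hH)
  have hH : H = {x} := eq_singleton_iff_unique_mem.2
    ⟨hxH, fun y hy => card_le_one.1 (by omega) y hy x hxH⟩
  subst hH
  have h0 := hsh _ hH 0 (mem_range.2 (by simp at hHm; omega)) x (mem_singleton_self x) (by omega)
    (by simp; omega)
  obtain ⟨z, hz⟩ := hmeet _ h0
  simp only [mem_inter, mem_erase, mem_insert, mem_singleton, mem_Icc] at hz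
  omega

/-- The term `k.choose t` is `1` for `t = k`, leaving room for `Icc 1 k` itself, and `0` for
`t > k`. -/
lemma hilton_milner_of_isShifted_of_forall_inter_Icc (h𝓗 : 𝓗 ⊆ (range m).powersetCard k)
    (hint : CrossIntersecting 𝓗 𝓗) (hsh : IsShifted (range m) 𝓗)
    (hmeet : ∀ H ∈ 𝓗, (H ∩ Icc 1 t).Nonempty) (hkt : k ≤ t) (hkm : 2 * k ≤ m) :
    #𝓗 + (m - 1 - t).choose (k - 1) ≤ (m - 1).choose (k - 1) + k.choose t := by
  induction m using Nat.strong_induction_on generalizing k 𝓗 with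
  | _ m ih =>
  rcases le_or_gt k 1 with hk | hk
  · simp [hsh.eq_empty_of_forall_inter_Icc h𝓗 hmeet hk, Nat.sub_eq_zero_of_le hk]
  obtain ⟨m, rfl⟩ : ∃ m', m = m' + 1 := ⟨m - 1, by omega⟩
  have hekr := erdos_ko_rado_range h𝓗 hint hkm
  simp only [Nat.add_sub_cancel] at hekr ⊢
  by_cases hmt : m ≤ t
  · rw [Nat.sub_eq_zero_of_le hmt, Nat.choose_eq_zero_of_lt (by omega : 0 < k - 1)]
    omega
  by_cases hmk : m + 1 = 2 * k
  · rcases hkt.eq_or_lt with rfl | hlt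
    · rw [Nat.choose_self, show m - k = k - 1 by omega, Nat.choose_self]
      omega
    · rw [Nat.choose_eq_zero_of_lt (by omega : m - t < k - 1)]
      omega
  have hground : (range (m + 1)).erase m = range m := by
    rw [range_add_one, erase_insert notMem_range_self]
  have htop : ∀ x ∈ range (m + 1), x ≤ m := fun x hx => Nat.lt_succ_iff.1 (mem_range.1 hx)
  have hmT : m ∉ Icc 1 t := by simp; omega
  have hbar : #(𝓗.nonMemberSubfamily m) + (m - 1 - t).choose (k - 1) ≤
      (m - 1).choose (k - 1) + k.choose t := by
    refine ih m (by omega) ?_ (hint.mono (filter_subset _ _) (filter_subset _ _)) ?_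
      (fun H hH => hmeet H (mem_nonMemberSubfamily.1 hH).1) hkt (by omega)
    · exact hground ▸ nonMemberSubfamily_subset_powersetCard h𝓗
    · exact hground ▸ hsh.nonMemberSubfamily
  have hlinks : #(𝓗.memberSubfamily m) + (m - 1 - t).choose (k - 1 - 1) ≤
      (m - 1).choose (k - 1 - 1) + (k - 1).choose t := by
    refine ih m (by omega) ?_ (hint.memberSubfamily h𝓗 h𝓗 hsh htop (by simp; omega)) ?_
      (fun H => inter_nonempty_of_mem_memberSubfamily hmeet hmT) (by omega) (by omega)
    · exact hground ▸ memberSubfamily_subset_powersetCard h𝓗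
    · exact hground ▸ hsh.memberSubfamily
  have hsplit := card_memberSubfamily_add_card_nonMemberSubfamily m 𝓗
  rw [Nat.choose_eq_zero_of_lt (by omega : k - 1 < t)] at hlinks
  rw [Nat.choose_eq_choose_pred_add (by omega : 0 < m) (by omega : 0 < k - 1),
    Nat.choose_eq_choose_pred_add (by omega : 0 < m - t) (by omega : 0 < k - 1),
    show m - t - 1 = m - 1 - t by omega]
  omega

lemma IsShifted.Icc_mem (hsh : IsShifted (range n) 𝓕) (h𝓕 : 𝓕 ⊆ (range n).powersetCard r)
    (hF : F ∈ 𝓕) (h0F : 0 ∉ F) : Icc 1 r ∈ 𝓕 := by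
  obtain ⟨G, hG, hmin⟩ := exists_min_image {G ∈ 𝓕 | 0 ∉ G} (fun G => ∑ x ∈ G, x)
    ⟨F, mem_filter.2 ⟨hF, h0F⟩⟩
  obtain ⟨hG, h0G⟩ := mem_filter.1 hG
  obtain ⟨hGn, hGr⟩ := mem_powersetCard.1 (h𝓕 hG)
  by_contra hne
  have hcard : #(Icc 1 r) = #G := by simp [hGr]
  obtain ⟨j, hjG, hjI⟩ := not_subset.1 fun h => hne (eq_of_subset_of_card_le h hcard.le ▸ hG)
  obtain ⟨i, hiI, hiG⟩ := not_subset.1 fun h => hne (eq_of_subset_of_card_le h hcard.ge ▸ hG)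
  have hj0 : j ≠ 0 := fun h => h0G (h ▸ hjG)
  simp only [mem_Icc] at hiI hjI
  have hij : i < j := by omega
  have hjn : j < n := mem_range.1 (hGn hjG)
  have hG' := hsh G hG i (mem_range.2 (by omega)) j hjG hij hiG
  have h0G' : 0 ∉ (insert i G).erase j := by simp [h0G]; omega
  exact (hmin _ (mem_filter.2 ⟨hG', h0G'⟩)).not_gt (sum_erase_insert_lt hij hiG hjG)

lemma hilton_milner_of_isShifted (h𝓕 : 𝓕 ⊆ (range n).powersetCard r)
    (hint : CrossIntersecting 𝓕 𝓕) (hsh : IsShifted (range n) 𝓕)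
    (hnt : ¬ ∃ a, ∀ F ∈ 𝓕, a ∈ F) (hrn : 2 * r ≤ n) :
    #𝓕 + (n - 1 - r).choose (r - 1) ≤ (n - 1).choose (r - 1) + 1 := by
  obtain ⟨F, hF, h0F⟩ : ∃ F ∈ 𝓕, 0 ∉ F := by simpa using not_exists.1 hnt 0
  have hI := hsh.Icc_mem h𝓕 hF h0F
  have := hilton_milner_of_isShifted_of_forall_inter_Icc h𝓕 hint hsh
    (fun H hH => hint H hH _ hI) le_rfl hrn
  rwa [Nat.choose_self] at this

end ShiftedFamilies

section CrossIntersectingPairs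

variable {U : Finset ℕ} {𝓐 𝓑 : Finset (Finset ℕ)} {a k : ℕ}

lemma card_memberSubfamily_add_choose_le (h : CrossIntersecting 𝓐 𝓑) (h𝓐 : 𝓐 ⊆ U.powersetCard k)
    (h𝓑 : 𝓑 ⊆ U.powersetCard k) (hne : (𝓐.nonMemberSubfamily a).Nonempty) :
    #(𝓑.memberSubfamily a) + (#(U.erase a) - k).choose (k - 1) ≤ (#(U.erase a)).choose (k - 1) := by
  obtain ⟨A, hA⟩ := hne
  obtain ⟨hAU, hAk⟩ := mem_powersetCard.1 (nonMemberSubfamily_subset_powersetCard h𝓐 hA)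
  obtain ⟨hA, haA⟩ := mem_nonMemberSubfamily.1 hA
  rw [← hAk]
  exact card_add_choose_le_of_forall_inter_nonempty (hAk ▸ memberSubfamily_subset_powersetCard h𝓑)
    hAU fun _ => inter_nonempty_of_mem_memberSubfamily (fun G hG => h.symm G hG A hA) haA

lemma card_add_card_add_choose_le_of_isShifted (h𝓐 : 𝓐 ⊆ U.powersetCard a)
    (h𝓑 : 𝓑 ⊆ U.powersetCard a) (h : CrossIntersecting 𝓐 𝓑) (hA : 𝓐.Nonempty) (hB : 𝓑.Nonempty)
    (hsh𝓐 : IsShifted U 𝓐) (hsh𝓑 : IsShifted U 𝓑) (haU : 2 * a ≤ #U) :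
    #𝓐 + #𝓑 + (#U - a).choose a ≤ (#U).choose a + 1 := by
  induction U using Finset.strongInduction generalizing a 𝓐 𝓑 with
  | H U ih =>
  have ha : 0 < a := h.pos_of_subset_powersetCard h𝓐 hA hB
  rcases haU.eq_or_lt with hU | hU
  · have := card_add_card_le_choose_of_card_eq h𝓐 h𝓑 hU.symm h
    rw [← hU, show 2 * a - a = a by omega, Nat.choose_self]
    omega
  obtain ⟨top, htopU, htop⟩ : ∃ top ∈ U, ∀ x ∈ U, x ≤ top :=
    U.exists_max_image id (card_pos.1 (by omega))
  have hcard : #(U.erase top) = #U - 1 := card_erase_of_mem htopU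
  have hN𝓐 := hsh𝓐.nonMemberSubfamily_nonempty h𝓐 hA (by omega) htop
  have hN𝓑 := hsh𝓑.nonMemberSubfamily_nonempty h𝓑 hB (by omega) htop
  have hbar := ih _ (erase_ssubset htopU) (nonMemberSubfamily_subset_powersetCard h𝓐)
    (nonMemberSubfamily_subset_powersetCard h𝓑) (h.mono (filter_subset _ _) (filter_subset _ _))
    hN𝓐 hN𝓑 hsh𝓐.nonMemberSubfamily hsh𝓑.nonMemberSubfamily (by omega)
  have hlinks : #(𝓐.memberSubfamily top) + #(𝓑.memberSubfamily top) +
      (#U - 1 - a).choose (a - 1) ≤ (#U - 1).choose (a - 1) := by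
    have h𝓐' := card_memberSubfamily_add_choose_le h.symm h𝓑 h𝓐 hN𝓑
    have h𝓑' := card_memberSubfamily_add_choose_le h h𝓐 h𝓑 hN𝓐
    rw [hcard] at h𝓐' h𝓑'
    rcases (𝓐.memberSubfamily top).eq_empty_or_nonempty with hM𝓐 | hM𝓐
    · rw [hM𝓐, card_empty]
      omega
    rcases (𝓑.memberSubfamily top).eq_empty_or_nonempty with hM𝓑 | hM𝓑
    · rw [hM𝓑, card_empty]
      omega
    have hM := h.memberSubfamily h𝓐 h𝓑 hsh𝓑 htop haU
    have hM𝓐U := memberSubfamily_subset_powersetCard (a := top) h𝓐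
    have ha1 : 0 < a - 1 := hM.pos_of_subset_powersetCard hM𝓐U hM𝓐 hM𝓑
    have := ih _ (erase_ssubset htopU) hM𝓐U (memberSubfamily_subset_powersetCard h𝓑) hM hM𝓐 hM𝓑
      hsh𝓐.memberSubfamily hsh𝓑.memberSubfamily (by omega)
    rw [hcard, Nat.choose_eq_choose_pred_add (by omega : 0 < #U - 1 - (a - 1)) ha1,
      show #U - 1 - (a - 1) - 1 = #U - 1 - a by omega] at this
    have : 0 < (#U - 1 - a).choose (a - 1 - 1) := Nat.choose_pos (by omega)
    omega
  have hsplit𝓐 := card_memberSubfamily_add_card_nonMemberSubfamily top 𝓐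
  have hsplit𝓑 := card_memberSubfamily_add_card_nonMemberSubfamily top 𝓑
  rw [hcard] at hbar
  rw [Nat.choose_eq_choose_pred_add (by omega : 0 < #U) ha,
    Nat.choose_eq_choose_pred_add (by omega : 0 < #U - a) ha, show #U - a - 1 = #U - 1 - a by omega]
  omega

lemma card_add_card_add_choose_le (h𝓐 : 𝓐 ⊆ U.powersetCard a) (h𝓑 : 𝓑 ⊆ U.powersetCard a)
    (h : CrossIntersecting 𝓐 𝓑) (hA : 𝓐.Nonempty) (hB : 𝓑.Nonempty) (haU : 2 * a ≤ #U) :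
    #𝓐 + #𝓑 + (#U - a).choose a ≤ (#U).choose a + 1 := by
  obtain ⟨w, hw⟩ : ∃ w, totalWeight 𝓐 + totalWeight 𝓑 = w := ⟨_, rfl⟩
  induction w using Nat.strong_induction_on generalizing 𝓐 𝓑 with
  | _ w ih =>
  by_cases hsh : IsShifted U 𝓐 ∧ IsShifted U 𝓑
  · exact card_add_card_add_choose_le_of_isShifted h𝓐 h𝓑 h hA hB hsh.1 hsh.2 haU
  obtain ⟨i, hi, j, hij, hne⟩ : ∃ i ∈ U, ∃ j, i < j ∧ (𝓒 {i} {j} 𝓐 ≠ 𝓐 ∨ 𝓒 {i} {j} 𝓑 ≠ 𝓑) := by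
    rcases not_and_or.1 hsh with hsh | hsh
    · obtain ⟨i, hi, j, -, hij, hne⟩ := exists_compression_ne_of_not_isShifted h𝓐 hsh
      exact ⟨i, hi, j, hij, Or.inl hne⟩
    · obtain ⟨i, hi, j, -, hij, hne⟩ := exists_compression_ne_of_not_isShifted h𝓑 hsh
      exact ⟨i, hi, j, hij, Or.inr hne⟩
  have hlt : totalWeight (𝓒 {i} {j} 𝓐) + totalWeight (𝓒 {i} {j} 𝓑) < w := by
    have := totalWeight_compression_le (𝓖 := 𝓐) hij
    have := totalWeight_compression_le (𝓖 := 𝓑) hij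
    rcases hne with hne | hne
    · have := totalWeight_compression_lt hij hne
      omega
    · have := totalWeight_compression_lt hij hne
      omega
  have := ih _ hlt (compression_subset_powersetCard hi h𝓐) (compression_subset_powersetCard hi h𝓑)
    h.compression (by rw [← card_pos, UV.card_compression]; exact hA.card_pos)
    (by rw [← card_pos, UV.card_compression]; exact hB.card_pos) rfl
  rwa [UV.card_compression, UV.card_compression] at this

end CrossIntersectingPairs

section NontrivialFamilies

variable {U : Finset ℕ} {𝓕 : Finset (Finset ℕ)} {n r x y : ℕ}

lemma hilton_milner_of_forall_mem_or_mem (h𝓕 : 𝓕 ⊆ U.powersetCard r)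
    (hint : CrossIntersecting 𝓕 𝓕) (hnt : ¬ ∃ a, ∀ F ∈ 𝓕, a ∈ F)
    (hx : x ∈ U) (hy : y ∈ U) (hxy : x ≠ y) (hcover : ∀ F ∈ 𝓕, x ∈ F ∨ y ∈ F)
    (hrU : 2 * r ≤ #U) :
    #𝓕 + (#U - 1 - r).choose (r - 1) ≤ (#U - 1).choose (r - 1) + 1 := by
  have hsplit := card_eq_of_forall_mem_or_mem hcover
  have hcross := hint.memberSubfamily_nonMemberSubfamily (x := x) (y := y)
  set 𝓐 := (𝓕.nonMemberSubfamily y).memberSubfamily x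
  set 𝓑 := (𝓕.memberSubfamily y).nonMemberSubfamily x
  have hV : #((U.erase y).erase x) = #U - 2 := by
    rw [card_erase_of_mem (mem_erase.2 ⟨hxy, hx⟩), card_erase_of_mem hy]
    omega
  have h𝓐 : 𝓐 ⊆ ((U.erase y).erase x).powersetCard (r - 1) :=
    memberSubfamily_subset_powersetCard (nonMemberSubfamily_subset_powersetCard h𝓕)
  have h𝓑 : 𝓑 ⊆ ((U.erase y).erase x).powersetCard (r - 1) :=
    nonMemberSubfamily_subset_powersetCard (memberSubfamily_subset_powersetCard h𝓕)
  have hA : 𝓐.Nonempty := by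
    obtain ⟨F, hF, hyF⟩ : ∃ F ∈ 𝓕, y ∉ F := by simpa using not_exists.1 hnt y
    have hxF := (hcover F hF).resolve_right hyF
    exact ⟨F.erase x, mem_memberSubfamily.2 ⟨by simpa [insert_erase hxF] using ⟨hF, hyF⟩,
      notMem_erase _ _⟩⟩
  have hB : 𝓑.Nonempty := by
    obtain ⟨F, hF, hxF⟩ : ∃ F ∈ 𝓕, x ∉ F := by simpa using not_exists.1 hnt x
    have hyF := (hcover F hF).resolve_left hxF
    exact ⟨F.erase y, mem_nonMemberSubfamily.2 ⟨mem_memberSubfamily.2 ⟨by rwa [insert_erase hyF],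
      notMem_erase _ _⟩, fun h => hxF (mem_of_mem_erase h)⟩⟩
  have hr : 0 < r - 1 := hcross.pos_of_subset_powersetCard h𝓐 hA hB
  have hpair := card_add_card_add_choose_le h𝓐 h𝓑 hcross hA hB (by omega)
  have hboth : #((𝓕.memberSubfamily y).memberSubfamily x) ≤ (#U - 2).choose (r - 1 - 1) := by
    simpa [hV] using card_le_card <| memberSubfamily_subset_powersetCard (a := x)
      (memberSubfamily_subset_powersetCard (a := y) h𝓕)
  rw [hV, show #U - 2 - (r - 1) = #U - 1 - r by omega] at hpair
  rw [Nat.choose_eq_choose_pred_add (by omega : 0 < #U - 1) hr, show #U - 1 - 1 = #U - 2 by omega]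
  omega

lemma hilton_milner_range (h𝓕 : 𝓕 ⊆ (range n).powersetCard r)
    (hint : CrossIntersecting 𝓕 𝓕) (hnt : ¬ ∃ a, ∀ F ∈ 𝓕, a ∈ F) (hrn : 2 * r ≤ n) :
    #𝓕 + (n - 1 - r).choose (r - 1) ≤ (n - 1).choose (r - 1) + 1 := by
  obtain ⟨w, hw⟩ : ∃ w, totalWeight 𝓕 = w := ⟨_, rfl⟩
  induction w using Nat.strong_induction_on generalizing 𝓕 with
  | _ w ih =>
  by_cases hsh : IsShifted (range n) 𝓕
  · exact hilton_milner_of_isShifted h𝓕 hint hsh hnt hrn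
  obtain ⟨i, hi, j, hj, hij, hne⟩ := exists_compression_ne_of_not_isShifted h𝓕 hsh
  by_cases htriv : ∃ a, ∀ F ∈ 𝓒 {i} {j} 𝓕, a ∈ F
  · simpa using hilton_milner_of_forall_mem_or_mem h𝓕 hint hnt hi hj hij.ne
      (fun F hF => mem_or_mem_of_forall_mem_compression hnt htriv hF) (by simpa using hrn)
  · have := ih _ (hw ▸ totalWeight_compression_lt hij hne) (compression_subset_powersetCard hi h𝓕)
      hint.compression htriv rfl
    rwa [UV.card_compression] at this

end NontrivialFamilies

/-- **Hilton–Milner theorem.** If `r < n/2` and `𝓕` is an intersecting family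
of `r`-element subsets of `{1, …, n}` with no common element, then
`|𝓕| ≤ C(n-1, r-1) - C(n-r-1, r-1) + 1`. -/
theorem hilton_milner (n r : ℕ) (hr : 2 * r < n)
    (𝓕 : Finset (Finset (Fin n)))
    (hcard : ∀ s ∈ 𝓕, s.card = r)
    (hint : ∀ s ∈ 𝓕, ∀ t ∈ 𝓕, (s ∩ t).Nonempty)
    (hnocommon : ¬ ∃ a : Fin n, ∀ s ∈ 𝓕, a ∈ s) :
    𝓕.card ≤ (n - 1).choose (r - 1) - (n - r - 1).choose (r - 1) + 1 := by
  set 𝓖 := 𝓕.map (mapEmbedding Fin.valEmbedding).toEmbedding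
  have h𝓖 : 𝓖 ⊆ (range n).powersetCard r := by
    simp only [𝓖, subset_iff, mem_map, RelEmbedding.coe_toEmbedding, mapEmbedding_apply]
    rintro _ ⟨s, hs, rfl⟩
    exact mem_powersetCard.2 ⟨by simp [subset_iff], by simp [hcard s hs]⟩
  have hnt : ¬ ∃ a, ∀ G ∈ 𝓖, a ∈ G := by
    rintro ⟨a, ha⟩
    rcases 𝓕.eq_empty_or_nonempty with rfl | ⟨s₀, hs₀⟩
    · exact hnocommon ⟨⟨0, by omega⟩, by simp⟩
    have hmem : ∀ s ∈ 𝓕, a ∈ s.map Fin.valEmbedding := fun s hs => by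
      simpa using ha _ (mem_map_of_mem _ hs)
    obtain ⟨b, -, rfl⟩ := mem_map.1 (hmem s₀ hs₀)
    exact hnocommon ⟨b, fun s hs => (mem_map' _).1 (hmem s hs)⟩
  have := hilton_milner_range h𝓖 (CrossIntersecting.map hint _) hnt hr.le
  rw [card_map] at this
  rw [show n - r - 1 = n - 1 - r by omega]
  omega
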